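/- Let γ, γ̃ ∈ ℝ with γ ≤ γ̃ and let the time domain be ℤ. Suppose the γ-shifted system has a dichotomy on a splitting (L1,L2) and the γ̃-shifted system has a dichotomy on a splitting (L̃1,L̃2). Then L2 ⊇ L̃2. -/
import Mathlib


open Set Filter Topology

noncomputable section

abbrev Euc (d : ℕ) := EuclideanSpace ℝ (Fin d)

def solFwd {d : ℕ} (A : ℤ → (Euc d ≃L[ℝ] Euc d)) : ℕ → Euc d → Euc d
  | 0, x => x
  | n + 1, x => A (n : ℤ) (solFwd A n x)

def solBwd {d : ℕ} (A : ℤ → (Euc d ≃L[ℝ] Euc d)) : ℕ → Euc d → Euc d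
  | 0, x => (A (-1)).symm x
  | n + 1, x => (A (Int.negSucc (n + 1))).symm (solBwd A n x)

/-- The solution `x(n,x₀)` for two-sided time `ℤ`. -/
def solZ {d : ℕ} (A : ℤ → (Euc d ≃L[ℝ] Euc d)) : ℤ → Euc d → Euc d
  | Int.ofNat n, x => solFwd A n x
  | Int.negSucc n, x => solBwd A n x

/-- Boundedness of the coefficients `A(n)` and their inverses. -/
def BddSysZ {d : ℕ} (A : ℤ → (Euc d ≃L[ℝ] Euc d)) : Prop :=
  (∃ c : ℝ, ∀ n : ℤ, ‖(A n : Euc d →L[ℝ] Euc d)‖ ≤ c) ∧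
  (∃ c : ℝ, ∀ n : ℤ, ‖((A n).symm : Euc d →L[ℝ] Euc d)‖ ≤ c)

/-- `D1(γ,U)` holds uniformly (two-sided time). -/
def D1uZ {d : ℕ} (A : ℤ → (Euc d ≃L[ℝ] Euc d)) (γ : ℝ) (U : Submodule ℝ (Euc d)) : Prop :=
  ∃ C : ℝ, 0 < C ∧
    ∀ m n : ℤ, m ≤ n → ∀ x₀ ∈ U,
      ‖solZ A n x₀‖ ≤ C * Real.exp (γ * ((n : ℝ) - (m : ℝ))) * ‖solZ A m x₀‖

/-- `D2(γ,U)` holds uniformly (two-sided time). -/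
def D2uZ {d : ℕ} (A : ℤ → (Euc d ≃L[ℝ] Euc d)) (γ : ℝ) (U : Submodule ℝ (Euc d)) : Prop :=
  ∃ C : ℝ, 0 < C ∧
    ∀ m n : ℤ, m ≤ n → ∀ x₀ ∈ U,
      C * Real.exp (γ * ((n : ℝ) - (m : ℝ))) * ‖solZ A m x₀‖ ≤ ‖solZ A n x₀‖

/-- `𝒰` is a set of subspaces of `L` whose union is `L`. -/
def IsCover {d : ℕ} (𝒰 : Set (Submodule ℝ (Euc d))) (L : Submodule ℝ (Euc d)) : Prop :=
  (∀ U ∈ 𝒰, U ≤ L) ∧ (⋃ U ∈ 𝒰, (U : Set (Euc d))) = (L : Set (Euc d))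

/-- The `γ`-shifted system has a dichotomy on the splitting `(L1,L2)` (two-sided time). -/
def ShiftedDichotomyZ {d : ℕ} (A : ℤ → (Euc d ≃L[ℝ] Euc d)) (γ : ℝ)
    (L1 L2 : Submodule ℝ (Euc d)) : Prop :=
  IsCompl L1 L2 ∧
  ∃ 𝒰1 𝒰2 : Set (Submodule ℝ (Euc d)), IsCover 𝒰1 L1 ∧ IsCover 𝒰2 L2 ∧
    ∃ α : ℝ, 0 < α ∧ (∀ U ∈ 𝒰1, D1uZ A (γ - α) U) ∧ (∀ U ∈ 𝒰2, D2uZ A (γ + α) U)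


lemma solFwd_add {d : ℕ} (A : ℤ → (Euc d ≃L[ℝ] Euc d)) (n : ℕ) (x y : Euc d) :
    solFwd A n (x + y) = solFwd A n x + solFwd A n y := by
  induction n with
  | zero => rfl
  | succ n ih => simp [solFwd, ih, map_add]

lemma solBwd_add {d : ℕ} (A : ℤ → (Euc d ≃L[ℝ] Euc d)) (n : ℕ) (x y : Euc d) :
    solBwd A n (x + y) = solBwd A n x + solBwd A n y := by
  induction n with
  | zero => simp [solBwd, map_add]
  | succ n ih => simp [solBwd, ih, map_add]

lemma solZ_add {d : ℕ} (A : ℤ → (Euc d ≃L[ℝ] Euc d)) (n : ℤ) (x y : Euc d) :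
    solZ A n (x + y) = solZ A n x + solZ A n y := by
  cases n with
  | ofNat n => exact solFwd_add A n x y
  | negSucc n => exact solBwd_add A n x y

lemma solZ_zero {d : ℕ} (A : ℤ → (Euc d ≃L[ℝ] Euc d)) (x : Euc d) :
    solZ A 0 x = x := rfl

lemma tendsto_exp_mul_nat {b : ℝ} (hb : b < 0) :
    Tendsto (fun k : ℕ => Real.exp (b * k)) atTop (𝓝 0) :=
  Real.tendsto_exp_atBot.comp
    ((tendsto_natCast_atTop_atTop (R := ℝ)).const_mul_atTop_of_neg hb)

/-- **Monotonicity of dichotomy subspaces, two-sided time.** -/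
theorem dichotomy_subspace_antitone_Z {d : ℕ} (hd : 1 ≤ d)
    (A : ℤ → (Euc d ≃L[ℝ] Euc d)) (hA : BddSysZ A)
    (γ γ' : ℝ) (hγ : γ ≤ γ')
    (L1 L2 L1' L2' : Submodule ℝ (Euc d))
    (h : ShiftedDichotomyZ A γ L1 L2) (h' : ShiftedDichotomyZ A γ' L1' L2') :
    L2' ≤ L2 := by
  obtain ⟨hcompl, 𝒰1, 𝒰2, hc1, hc2, α, hα, hD1, hD2⟩ := h
  obtain ⟨_, 𝒰1', 𝒰2', hc1', hc2', α', hα', hD1', hD2'⟩ := h'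
  intro x₀ hx₀
  -- find U' ∈ 𝒰2' with x₀ ∈ U'
  have hx₀u : x₀ ∈ ⋃ U ∈ 𝒰2', (U : Set (Euc d)) := hc2'.2 ▸ hx₀
  rw [mem_iUnion₂] at hx₀u
  obtain ⟨U', hU', hxU'⟩ := hx₀u
  obtain ⟨C', hC'pos, hC'⟩ := hD2' U' hU'
  -- decompose x₀ = y + z with y ∈ L1, z ∈ L2
  have hxtop : x₀ ∈ L1 ⊔ L2 := by rw [hcompl.sup_eq_top]; trivial
  obtain ⟨y, hy, z, hz, hyz⟩ := Submodule.mem_sup.mp hxtop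
  -- find cover elements containing y and z
  have hyu : y ∈ ⋃ U ∈ 𝒰1, (U : Set (Euc d)) := hc1.2 ▸ hy
  rw [mem_iUnion₂] at hyu
  obtain ⟨U1, hU1, hyU1⟩ := hyu
  have hzu : z ∈ ⋃ U ∈ 𝒰2, (U : Set (Euc d)) := hc2.2 ▸ hz
  rw [mem_iUnion₂] at hzu
  obtain ⟨U2, hU2, hzU2⟩ := hzu
  obtain ⟨C₁, hC₁pos, hC₁⟩ := hD1 U1 hU1
  obtain ⟨C₂, hC₂pos, hC₂⟩ := hD2 U2 hU2
  -- the key bound, for each k : ℕ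
  have key : ∀ k : ℕ, ‖y‖ ≤ (C₁ / C' * ‖x₀‖) * Real.exp (((γ - α) - (γ' + α')) * k)
      + (C₁ / C₂ * ‖z‖) * Real.exp (((γ - α) - (γ + α)) * k) := by
    intro k
    set m : ℤ := -(k : ℤ) with hm
    have hm0 : m ≤ 0 := neg_nonpos.mpr (Int.natCast_nonneg k)
    have hcast : ((0 : ℤ) : ℝ) - (m : ℝ) = (k : ℝ) := by push_cast [hm]; ring
    have h1 := hC₁ m 0 hm0 y hyU1
    have h2 := hC' m 0 hm0 x₀ hxU'
    have h3 := hC₂ m 0 hm0 z hzU2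
    rw [hcast, solZ_zero] at h1 h2 h3
    set Eδ := Real.exp ((γ - α) * k) with hEδ
    set Eβ' := Real.exp ((γ' + α') * k) with hEβ'
    set Eβ := Real.exp ((γ + α) * k) with hEβ
    have hEδp : 0 < Eδ := Real.exp_pos _
    have hEβ'p : 0 < Eβ' := Real.exp_pos _
    have hEβp : 0 < Eβ := Real.exp_pos _
    have htri : ‖solZ A m y‖ ≤ ‖solZ A m x₀‖ + ‖solZ A m z‖ := by
      have hadd : solZ A m x₀ = solZ A m y + solZ A m z := by
        rw [← hyz]; exact solZ_add A m y z
      have : solZ A m y = solZ A m x₀ - solZ A m z := by rw [hadd]; abel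
      rw [this]
      exact norm_sub_le _ _
    have hbx : ‖solZ A m x₀‖ ≤ ‖x₀‖ / (C' * Eβ') := by
      rw [le_div_iff₀ (by positivity)]
      nlinarith [h2]
    have hbz : ‖solZ A m z‖ ≤ ‖z‖ / (C₂ * Eβ) := by
      rw [le_div_iff₀ (by positivity)]
      nlinarith [h3]
    have step : ‖y‖ ≤ C₁ * Eδ * (‖x₀‖ / (C' * Eβ') + ‖z‖ / (C₂ * Eβ)) := by
      calc ‖y‖ ≤ C₁ * Eδ * ‖solZ A m y‖ := h1
        _ ≤ C₁ * Eδ * (‖solZ A m x₀‖ + ‖solZ A m z‖) := by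
            apply mul_le_mul_of_nonneg_left htri (by positivity)
        _ ≤ C₁ * Eδ * (‖x₀‖ / (C' * Eβ') + ‖z‖ / (C₂ * Eβ)) := by
            apply mul_le_mul_of_nonneg_left (add_le_add hbx hbz) (by positivity)
    have e1 : Real.exp (((γ - α) - (γ' + α')) * k) = Eδ / Eβ' := by
      rw [hEδ, hEβ', ← Real.exp_sub]; ring_nf
    have e2 : Real.exp (((γ - α) - (γ + α)) * k) = Eδ / Eβ := by
      rw [hEδ, hEβ, ← Real.exp_sub]; ring_nf
    rw [e1, e2]
    calc ‖y‖ ≤ C₁ * Eδ * (‖x₀‖ / (C' * Eβ') + ‖z‖ / (C₂ * Eβ)) := step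
      _ = (C₁ / C' * ‖x₀‖) * (Eδ / Eβ') + (C₁ / C₂ * ‖z‖) * (Eδ / Eβ) := by
          field_simp
  -- the bound tends to 0
  have hb1 : ((γ - α) - (γ' + α')) < 0 := by linarith
  have hb2 : ((γ - α) - (γ + α)) < 0 := by linarith
  have htend : Tendsto (fun k : ℕ => (C₁ / C' * ‖x₀‖) * Real.exp (((γ - α) - (γ' + α')) * k)
      + (C₁ / C₂ * ‖z‖) * Real.exp (((γ - α) - (γ + α)) * k)) atTop (𝓝 0) := by
    have t1 := (tendsto_exp_mul_nat hb1).const_mul (C₁ / C' * ‖x₀‖)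
    have t2 := (tendsto_exp_mul_nat hb2).const_mul (C₁ / C₂ * ‖z‖)
    simpa using t1.add t2
  have hy0 : ‖y‖ ≤ 0 := ge_of_tendsto' htend key
  have hyz0 : y = 0 := by
    rwa [← norm_le_zero_iff]
  rw [← hyz, hyz0, zero_add]
  exact hz

end
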